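/- Let M_0, ..., M_k be n×n real matrices each of which is strictly diagonally dominant (|m_{ss}^{(i)}| > Σ_{t≠s} |m_{st}^{(i)}| for every row s), and suppose for each row index s the diagonal entries (M_0)_{ss}, ..., (M_k)_{ss} all have the same sign. Then for any nonnegative diagonal matrices D_0, ..., D_k with entries in [0,1] and D_0 + ... + D_k = I, the matrix S = Σ_{i=0}^k D_i M_i is strictly diagonally dominant (hence nonsingular). -/

import Mathlib

/-!
Row `s` of `S = ∑ i, D_i M_i` is the convex combination `∑ i, d_i(s) • (row s of M_i)`. By the
triangle inequality its off-diagonal mass is at most `∑ i, d_i(s) · ∑_{t ≠ s} |m^{(i)}_{st}|`, which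
is strictly below `∑ i, d_i(s) |m^{(i)}_{ss}|` because some weight `d_i(s)` is positive. Since the
diagonal entries `m^{(i)}_{ss}` share a sign, no cancellation occurs on the diagonal and this last sum
is exactly `|S_{ss}|`.
-/

open Matrix

/-- Strict diagonal dominance. -/
def SDD {n : ℕ} (A : Matrix (Fin n) (Fin n) ℝ) : Prop :=
  ∀ s, ∑ t ∈ Finset.univ.erase s, |A s t| < |A s s|

open Finset

lemma abs_sum_eq_sum_abs_of_nonneg_or_nonpos {ι : Type*} (s : Finset ι) (f : ι → ℝ)
    (hf : (∀ i ∈ s, 0 ≤ f i) ∨ (∀ i ∈ s, f i ≤ 0)) : |∑ i ∈ s, f i| = ∑ i ∈ s, |f i| := by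
  rcases hf with hnonneg | hnonpos
  · rw [abs_sum_of_nonneg hnonneg]
    exact sum_congr rfl fun i hi => (abs_of_nonneg (hnonneg i hi)).symm
  · rw [← abs_neg, ← sum_neg_distrib, abs_sum_of_nonneg fun i hi => neg_nonneg.2 (hnonpos i hi)]
    exact sum_congr rfl fun i hi => (abs_of_nonpos (hnonpos i hi)).symm

lemma abs_sum_mul_of_same_sign {ι : Type*} [Fintype ι] (c a : ι → ℝ) (hc : ∀ i, 0 ≤ c i)
    (ha : (∀ i, 0 < a i) ∨ (∀ i, a i < 0)) : |∑ i, c i * a i| = ∑ i, c i * |a i| := by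
  have hterm : ∀ i, |c i * a i| = c i * |a i| := fun i => by rw [abs_mul, abs_of_nonneg (hc i)]
  simp only [← hterm]
  refine abs_sum_eq_sum_abs_of_nonneg_or_nonpos _ _ (ha.imp (fun hpos i _ => ?_) fun hneg i _ => ?_)
  · exact mul_nonneg (hc i) (hpos i).le
  · exact mul_nonpos_of_nonneg_of_nonpos (hc i) (hneg i).le

lemma sum_diagonal_mul_apply {n : ℕ} {ι : Type*} [Fintype ι] (d : ι → Fin n → ℝ)
    (M : ι → Matrix (Fin n) (Fin n) ℝ) (s t : Fin n) :
    (∑ i, diagonal (d i) * M i) s t = ∑ i, d i s * M i s t := by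
  simp only [Matrix.sum_apply, diagonal_mul]

theorem SDD.sum_diagonal_mul {n : ℕ} {ι : Type*} [Fintype ι] (M : ι → Matrix (Fin n) (Fin n) ℝ)
    (hsdd : ∀ i, SDD (M i)) (hsign : ∀ s, (∀ i, 0 < M i s s) ∨ (∀ i, M i s s < 0))
    (d : ι → Fin n → ℝ) (hd : ∀ i s, 0 ≤ d i s) (hpos : ∀ s, ∃ i, 0 < d i s) :
    SDD (∑ i, diagonal (d i) * M i) := by
  intro s
  obtain ⟨i₀, hi₀⟩ := hpos s
  simp only [sum_diagonal_mul_apply]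
  calc ∑ t ∈ univ.erase s, |∑ i, d i s * M i s t|
      ≤ ∑ t ∈ univ.erase s, ∑ i, d i s * |M i s t| := by
        gcongr with t
        refine (abs_sum_le_sum_abs _ _).trans_eq (sum_congr rfl fun i _ => ?_)
        rw [abs_mul, abs_of_nonneg (hd i s)]
    _ = ∑ i, d i s * ∑ t ∈ univ.erase s, |M i s t| := by
        rw [sum_comm]; simp only [mul_sum]
    _ < ∑ i, d i s * |M i s s| :=
        sum_lt_sum (fun i _ => mul_le_mul_of_nonneg_left (hsdd i s).le (hd i s))
          ⟨i₀, mem_univ _, mul_lt_mul_of_pos_left (hsdd i₀ s) hi₀⟩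
    _ = |∑ i, d i s * M i s s| := (abs_sum_mul_of_same_sign _ _ (fun i => hd i s) (hsign s)).symm

theorem stmt_6 (n k : ℕ) (M : Fin (k+1) → Matrix (Fin n) (Fin n) ℝ)
    (hsdd : ∀ i, SDD (M i))
    (hsign : ∀ s, (∀ i, 0 < M i s s) ∨ (∀ i, M i s s < 0))
    (d : Fin (k+1) → Fin n → ℝ)
    (hd : ∀ i s, d i s ∈ Set.Icc (0:ℝ) 1) (hsum : ∀ s, ∑ i, d i s = 1) :
    SDD (∑ i, Matrix.diagonal (d i) * M i) := by
  refine SDD.sum_diagonal_mul M hsdd hsign d (fun i s => (hd i s).1) fun s => ?_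
  by_contra! hzero
  have hsum_zero : ∑ i, d i s = 0 := sum_eq_zero fun i _ => le_antisymm (hzero i) (hd i s).1
  exact one_ne_zero ((hsum s).symm.trans hsum_zero)
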